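/- Let Γ be an abelian group, Ψ ⊆ Γ a subgroup, and χ : Ψ → ℂ∖{0} a group homomorphism (into the multiplicative group of ℂ) such that χ(x) ≠ 1 for every x ∈ Ψ∖{0}. Suppose the quotient group Γ/Ψ carries a linear order compatible with its group structure (i.e. Γ/Ψ is a linearly ordered abelian group). Define c : Γ∖{0} → ℂ by: c(x) = (χ(x)+1)/(χ(x)−1) if x ∈ Ψ; c(x) = 1 if the image of x in Γ/Ψ is positive; c(x) = −1 if the image of x in Γ/Ψ is negative. Then c(−x) = −c(x) for all x ∈ Γ∖{0}, and for all x, y ∈ Γ∖{0} with x + y ≠ 0 one has c(x+y)·(c(x)+c(y)) = c(x)·c(y) + 1. -/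
import Mathlib


/-- The coefficients determined by a subgroup `Ψ ⊆ Γ`, a character `χ : Ψ → ℂ∖{0}` with
`χ(x) ≠ 1` for `x ≠ 0`, and a linear order on `Γ/Ψ` compatible with addition, satisfy
`c(-x) = -c(x)` and the φ-bracket equation `c(x+y)(c(x)+c(y)) = c(x)c(y) + 1`. -/
theorem phi_bracket_coefficients
    {Γ : Type*} [AddCommGroup Γ] (Ψ : AddSubgroup Γ)
    [LinearOrder (Γ ⧸ Ψ)]
    (hord : ∀ a b t : Γ ⧸ Ψ, a ≤ b → a + t ≤ b + t)
    (χ : ↥Ψ → ℂ)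
    (hmul : ∀ x y : ↥Ψ, χ (x + y) = χ x * χ y)
    (hne : ∀ x : ↥Ψ, χ x ≠ 0)
    (hone : ∀ x : ↥Ψ, x ≠ 0 → χ x ≠ 1)
    (c : Γ → ℂ)
    (hcΨ : ∀ (x : Γ) (hx : x ∈ Ψ), x ≠ 0 →
      c x = (χ ⟨x, hx⟩ + 1) / (χ ⟨x, hx⟩ - 1))
    (hcpos : ∀ x : Γ, x ≠ 0 → 0 < (QuotientAddGroup.mk x : Γ ⧸ Ψ) → c x = 1)
    (hcneg : ∀ x : Γ, x ≠ 0 → (QuotientAddGroup.mk x : Γ ⧸ Ψ) < 0 → c x = -1) :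
    (∀ x : Γ, x ≠ 0 → c (-x) = -c x) ∧
    ∀ x y : Γ, x ≠ 0 → y ≠ 0 → x + y ≠ 0 →
      c (x + y) * (c x + c y) = c x * c y + 1 := by
  -- χ(0) = 1
  have hχ0 : χ 0 = 1 := by
    have h := hmul 0 0
    rw [add_zero] at h
    have := hne 0
    field_simp at h
    tauto
  -- order facts
  have hneglt : ∀ a : Γ ⧸ Ψ, 0 < a → -a < 0 := by
    intro a ha
    have h := hord 0 a (-a) ha.le
    rw [zero_add, add_neg_cancel] at h
    exact lt_of_le_of_ne h (by simpa using ha.ne')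
  have hnegpos : ∀ a : Γ ⧸ Ψ, a < 0 → 0 < -a := by
    intro a ha
    have h := hord a 0 (-a) ha.le
    rw [zero_add, add_neg_cancel] at h
    exact lt_of_le_of_ne h (by simpa using ha.ne)
  have haddpos : ∀ a b : Γ ⧸ Ψ, 0 < a → 0 < b → 0 < a + b := by
    intro a b ha hb
    have h := hord 0 a b ha.le
    rw [zero_add] at h
    exact lt_of_lt_of_le hb h
  have haddneg : ∀ a b : Γ ⧸ Ψ, a < 0 → b < 0 → a + b < 0 := by
    intro a b ha hb
    have h := hord a 0 b ha.le
    rw [zero_add] at h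
    exact lt_of_le_of_lt h hb
  -- nonzero subtype elements
  have hsub : ∀ (x : Γ) (hx : x ∈ Ψ), x ≠ 0 → (⟨x, hx⟩ : ↥Ψ) ≠ 0 := by
    intro x hx hx0 h
    exact hx0 (by simpa using congrArg Subtype.val h)
  -- mk x = 0 iff x ∈ Ψ
  have hmk : ∀ x : Γ, (QuotientAddGroup.mk x : Γ ⧸ Ψ) = 0 ↔ x ∈ Ψ := fun x =>
    QuotientAddGroup.eq_zero_iff x
  have hmkneg : ∀ x : Γ, (QuotientAddGroup.mk (-x) : Γ ⧸ Ψ) =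
      -(QuotientAddGroup.mk x : Γ ⧸ Ψ) := fun x => rfl
  have hmkadd : ∀ x y : Γ, (QuotientAddGroup.mk (x + y) : Γ ⧸ Ψ) =
      (QuotientAddGroup.mk x : Γ ⧸ Ψ) + QuotientAddGroup.mk y := fun x y => rfl
  constructor
  · intro x hx0
    by_cases hx : x ∈ Ψ
    · have hnx : -x ∈ Ψ := neg_mem hx
      set a := χ ⟨x, hx⟩ with ha
      set b := χ ⟨-x, hnx⟩ with hb
      have hab : a * b = 1 := by
        rw [ha, hb, ← hmul]
        have : (⟨x, hx⟩ + ⟨-x, hnx⟩ : ↥Ψ) = 0 := by ext; simp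
        rw [this, hχ0]
      have ha1 : a - 1 ≠ 0 := sub_ne_zero.mpr (hone _ (hsub x hx hx0))
      have hb1 : b - 1 ≠ 0 := sub_ne_zero.mpr (hone _ (hsub (-x) hnx (by simpa using hx0)))
      rw [hcΨ x hx hx0, hcΨ (-x) hnx (by simpa using hx0), ← ha, ← hb]
      field_simp
      linear_combination 2 * hab
    · have h0 : (QuotientAddGroup.mk x : Γ ⧸ Ψ) ≠ 0 := fun h => hx ((hmk x).mp h)
      rcases h0.lt_or_gt with h | h
      · rw [hcneg x hx0 h, hcpos (-x) (by simpa using hx0) (by rw [hmkneg]; exact hnegpos _ h)]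
        ring
      · rw [hcpos x hx0 h, hcneg (-x) (by simpa using hx0) (by rw [hmkneg]; exact hneglt _ h)]
  · intro x y hx0 hy0 hxy0
    by_cases hx : x ∈ Ψ <;> by_cases hy : y ∈ Ψ
    · -- both in Ψ
      have hxy : x + y ∈ Ψ := add_mem hx hy
      set a := χ ⟨x, hx⟩ with ha
      set b := χ ⟨y, hy⟩ with hb
      have habc : χ ⟨x + y, hxy⟩ = a * b := by
        rw [ha, hb, ← hmul]
        exact congrArg χ (Subtype.ext rfl)
      have ha1 : a - 1 ≠ 0 := sub_ne_zero.mpr (hone _ (hsub x hx hx0))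
      have hb1 : b - 1 ≠ 0 := sub_ne_zero.mpr (hone _ (hsub y hy hy0))
      have hab1 : a * b - 1 ≠ 0 := by
        rw [← habc]
        exact sub_ne_zero.mpr (hone _ (hsub (x + y) hxy hxy0))
      rw [hcΨ x hx hx0, hcΨ y hy hy0, hcΨ (x + y) hxy hxy0, habc, ← ha, ← hb]
      field_simp
      ring
    · -- x ∈ Ψ, y ∉ Ψ
      have hy' : (QuotientAddGroup.mk y : Γ ⧸ Ψ) ≠ 0 := fun h => hy ((hmk y).mp h)
      have hmx : (QuotientAddGroup.mk x : Γ ⧸ Ψ) = 0 := (hmk x).mpr hx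
      have hmxy : (QuotientAddGroup.mk (x + y) : Γ ⧸ Ψ) = QuotientAddGroup.mk y := by
        rw [hmkadd, hmx, zero_add]
      have key : c (x + y) = c y ∧ c y * c y = 1 := by
        rcases hy'.lt_or_gt with h | h
        · rw [hcneg y hy0 h, hcneg (x + y) hxy0 (by rw [hmxy]; exact h)]
          norm_num
        · rw [hcpos y hy0 h, hcpos (x + y) hxy0 (by rw [hmxy]; exact h)]
          norm_num
      rw [key.1]
      linear_combination key.2
    · -- y ∈ Ψ, x ∉ Ψ
      have hx' : (QuotientAddGroup.mk x : Γ ⧸ Ψ) ≠ 0 := fun h => hx ((hmk x).mp h)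
      have hmy : (QuotientAddGroup.mk y : Γ ⧸ Ψ) = 0 := (hmk y).mpr hy
      have hmxy : (QuotientAddGroup.mk (x + y) : Γ ⧸ Ψ) = QuotientAddGroup.mk x := by
        rw [hmkadd, hmy, add_zero]
      have key : c (x + y) = c x ∧ c x * c x = 1 := by
        rcases hx'.lt_or_gt with h | h
        · rw [hcneg x hx0 h, hcneg (x + y) hxy0 (by rw [hmxy]; exact h)]
          norm_num
        · rw [hcpos x hx0 h, hcpos (x + y) hxy0 (by rw [hmxy]; exact h)]
          norm_num
      rw [key.1]
      linear_combination key.2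
    · -- neither in Ψ
      have hx' : (QuotientAddGroup.mk x : Γ ⧸ Ψ) ≠ 0 := fun h => hx ((hmk x).mp h)
      have hy' : (QuotientAddGroup.mk y : Γ ⧸ Ψ) ≠ 0 := fun h => hy ((hmk y).mp h)
      rcases hx'.lt_or_gt with h1 | h1 <;> rcases hy'.lt_or_gt with h2 | h2
      · -- both negative
        have h3 : (QuotientAddGroup.mk (x + y) : Γ ⧸ Ψ) < 0 := by
          rw [hmkadd]; exact haddneg _ _ h1 h2
        rw [hcneg x hx0 h1, hcneg y hy0 h2, hcneg (x + y) hxy0 h3]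
        ring
      · -- x neg, y pos
        rw [hcneg x hx0 h1, hcpos y hy0 h2]
        ring
      · -- x pos, y neg
        rw [hcpos x hx0 h1, hcneg y hy0 h2]
        ring
      · -- both positive
        have h3 : 0 < (QuotientAddGroup.mk (x + y) : Γ ⧸ Ψ) := by
          rw [hmkadd]; exact haddpos _ _ h1 h2
        rw [hcpos x hx0 h1, hcpos y hy0 h2, hcpos (x + y) hxy0 h3]
        ring
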